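/- Let 𝓡 be right amenable, let (F_i)_{i∈I} be a right Følner net in 𝓡, let θ, κ, and θ' be non-negative integers, and let T be a subset of M such that the family (B(t,θ'))_{t∈T} covers M. Then there is a positive real number ε and an index i₀ ∈ I such that for every index i ∈ I with i ≥ i₀ one has |T ∩ F_i^{-(θ+κ)}| ≥ ε · |F_i|. -/
import Mathlib


open Filter Set

namespace GoE

variable {G M Q : Type*}

/-- A left homogeneous space `⟨M, G, ▷⟩` together with a coordinate system
`⟨m₀, (g_{m₀,m})_{m∈M}⟩`: a cell space with finite stabiliser `G₀` of `m₀`. -/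
structure CellSpace (G M : Type*) [Group G] where
  act : G → M → M
  one_act : ∀ m : M, act 1 m = m
  mul_act : ∀ (g h : G) (m : M), act (g * h) m = act g (act h m)
  transitive : ∀ m m' : M, ∃ g : G, act g m = m'
  m0 : M
  coord : M → G
  coord_act : ∀ m : M, act (coord m) m0 = m
  stab_finite : {g : G | act g m0 = m0}.Finite

variable [Group G]

namespace CellSpace

/-- Membership in the stabiliser `G₀` of `m₀`. -/
def stab (R : CellSpace G M) (g : G) : Prop := R.act g R.m0 = R.m0

/-- The induced right semi-action `m ↝ gG₀ = g_{m₀,m} g ▷ m₀`, on representatives. -/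
def sAct (R : CellSpace G M) (m : M) (g : G) : M := R.act (R.coord m * g) R.m0

/-- `m ↝ ι n` where `ι : M → G/G₀`, `n ↦ G_{m₀,n}` is the canonical identification. -/
def nAct (R : CellSpace G M) (m n : M) : M := R.act (R.coord m * R.coord n) R.m0

/-- `S ⊆ G` represents a finite symmetric right generating set of cosets
(`G₀ · S ⊆ S`, `S⁻¹ ⊆ S`, and `S` generates). -/
structure IsRightGenSet (R : CellSpace G M) (S : Set G) : Prop where
  finite : S.Finite
  saturated : ∀ s ∈ S, ∀ g₀ : G, R.stab g₀ → s * g₀ ∈ S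
  stab_mul : ∀ g₀ : G, R.stab g₀ → ∀ s ∈ S, g₀ * s ∈ S
  symm : ∀ s ∈ S, s⁻¹ ∈ S
  generates : ∀ m : M, ∃ (k : ℕ) (f : ℕ → M), f 0 = R.m0 ∧ f k = m ∧
    ∀ i < k, ∃ s ∈ S, f (i + 1) = R.sAct (f i) s

/-- There is an `S`-path of length `n` from `m` to `m'` in the `S`-Cayley graph. -/
def Chain (R : CellSpace G M) (S : Set G) (m m' : M) (n : ℕ) : Prop :=
  ∃ f : ℕ → M, f 0 = m ∧ f n = m' ∧ ∀ i < n, ∃ s ∈ S, f (i + 1) = R.sAct (f i) s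

/-- The `S`-metric `d`. -/
noncomputable def dist (R : CellSpace G M) (S : Set G) (m m' : M) : ℕ :=
  sInf {n : ℕ | R.Chain S m m' n}

/-- The ball `B(m, ρ)` of radius `ρ` centred at `m`. -/
noncomputable def ball (R : CellSpace G M) (S : Set G) (m : M) (ρ : ℕ) : Set M :=
  {m' : M | R.dist S m m' ≤ ρ}

/-- The `θ`-interior `A^{-θ}` of `A`. -/
noncomputable def inter (R : CellSpace G M) (S : Set G) (A : Set M) (θ : ℕ) : Set M :=
  {m ∈ A | R.ball S m θ ⊆ A}

/-- The `θ`-closure `A^{+θ}` of `A`. -/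
noncomputable def clos (R : CellSpace G M) (S : Set G) (A : Set M) (θ : ℕ) : Set M :=
  {m : M | (R.ball S m θ ∩ A).Nonempty}

/-- The external `θ`-boundary `∂θ⁺A = A^{+θ} ∖ A`. -/
noncomputable def extB (R : CellSpace G M) (S : Set G) (A : Set M) (θ : ℕ) : Set M :=
  R.clos S A θ \ A

/-- The internal `θ`-boundary `∂θ⁻A = A ∖ A^{-θ}`. -/
noncomputable def intB (R : CellSpace G M) (S : Set G) (A : Set M) (θ : ℕ) : Set M :=
  A \ R.inter S A θ

/-- The `θ`-boundary `∂θA = A^{+θ} ∖ A^{-θ}`. -/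
noncomputable def bdry (R : CellSpace G M) (S : Set G) (A : Set M) (θ : ℕ) : Set M :=
  R.clos S A θ \ R.inter S A θ

end CellSpace

/-- The set `X_A` of restrictions to `A` of the elements of `X`. -/
def restr (A : Set M) (X : Set (M → Q)) : Set (A → Q) :=
  (fun x : M → Q => A.restrict x) '' X

/-- The pattern `p` (with domain `A`) semi-occurs in the configuration `c`:
there is `h ∈ H` with `h ⊛ p = c↾_{h ▷ dom p}`. -/
def SemiOccurs (R : CellSpace G M) (H : Subgroup G) {A : Set M} (p : A → Q)
    (c : M → Q) : Prop :=
  ∃ h ∈ H, ∀ a : A, c (R.act h ↑a) = p a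

/-- The pattern `p` (with domain `A`) occurs at `t` in the configuration `c`:
`t ⊛' p = c↾_{t ↝ A}`. -/
def OccursAt (R : CellSpace G M) {A : Set M} (p : A → Q) (t : M) (c : M → Q) : Prop :=
  ∀ a : A, c (R.nAct t ↑a) = p a

/-- The pattern `p` is allowed in `X`: it semi-occurs in some point of `X`. -/
def Allowed (R : CellSpace G M) (H : Subgroup G) (X : Set (M → Q)) {A : Set M}
    (p : A → Q) : Prop :=
  ∃ x ∈ X, SemiOccurs R H p x

/-- The set `⟨𝔉⟩` generated by a set `𝔉` of forbidden patterns. -/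
def Generated (R : CellSpace G M) (H : Subgroup G) (𝔉 : Set (Σ A : Set M, A → Q)) :
    Set (M → Q) :=
  {c : M → Q | ∀ f ∈ 𝔉, ¬ SemiOccurs R H f.2 c}

/-- `X` is a subshift of `Q^M`: it is generated by a set of blocks. -/
def IsSubshift (R : CellSpace G M) (H : Subgroup G) (X : Set (M → Q)) : Prop :=
  ∃ 𝔉 : Set (Σ A : Set M, A → Q), (∀ f ∈ 𝔉, f.1.Finite) ∧ X = Generated R H 𝔉

/-- `X` is a subshift of finite type: it is generated by a finite set of blocks. -/
def IsSubshiftFT (R : CellSpace G M) (H : Subgroup G) (X : Set (M → Q)) : Prop :=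
  ∃ 𝔉 : Set (Σ A : Set M, A → Q), 𝔉.Finite ∧ (∀ f ∈ 𝔉, f.1.Finite) ∧
    X = Generated R H 𝔉

/-- `X` is a `κ`-step subshift: it is generated by a set of `B(κ)`-blocks. -/
def IsStep (R : CellSpace G M) (S : Set G) (H : Subgroup G) (X : Set (M → Q))
    (κ : ℕ) : Prop :=
  ∃ 𝔉 : Set (Σ A : Set M, A → Q), (∀ f ∈ 𝔉, f.1 = R.ball S R.m0 κ) ∧
    X = Generated R H 𝔉

/-- `X` is `κ`-strongly irreducible. -/
def IsStronglyIrr (R : CellSpace G M) (S : Set G) (H : Subgroup G)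
    (X : Set (M → Q)) (κ : ℕ) : Prop :=
  ∀ (A B : Set M), A.Finite → B.Finite → ∀ (p : A → Q) (p' : B → Q),
    Allowed R H X p → Allowed R H X p' →
    (∀ a ∈ A, ∀ b ∈ B, κ + 1 ≤ R.dist S a b) →
    ∃ x ∈ X, A.restrict x = p ∧ B.restrict x = p'

/-- `X` has `ρ`-bounded propagation. -/
def HasBoundedProp (R : CellSpace G M) (S : Set G) (X : Set (M → Q)) (ρ : ℕ) : Prop :=
  ∀ F : Set M, F.Finite → ∀ p : F → Q,
    (∀ f ∈ F, ∃ x ∈ X, ∀ (m : M) (hm : m ∈ R.ball S f ρ ∩ F), p ⟨m, hm.2⟩ = x m) →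
    ∃ x ∈ X, F.restrict x = p

/-- `Δ` is a `κ`-local map from `X` to `Y`. -/
def IsLocalMap (R : CellSpace G M) (S : Set G) (H : Subgroup G)
    (X Y : Set (M → Q)) (Δ : (M → Q) → (M → Q)) (κ : ℕ) : Prop :=
  Set.MapsTo Δ X Y ∧
  ∃ N : Set M, N ⊆ R.ball S R.m0 κ ∧
    (∀ g₀ : G, R.stab g₀ → ∀ n ∈ N, R.act g₀ n ∈ N) ∧
    ∃ δ : (N → Q) → Q,
      (∀ h₀ ∈ H, R.stab h₀ →
        ∀ ℓ ∈ restr N X, ∀ ℓ' : N → Q,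
          (∀ (n : M) (hn : n ∈ N) (hn' : R.act h₀⁻¹ n ∈ N),
            ℓ' ⟨n, hn⟩ = ℓ ⟨R.act h₀⁻¹ n, hn'⟩) →
          δ ℓ' = δ ℓ) ∧
      ∀ x ∈ X, ∀ m : M, Δ x m = δ (fun n : N => x (R.nAct m ↑n))

/-- `Δ` is pre-injective on `X`. -/
def PreInjective (X : Set (M → Q)) (Δ : (M → Q) → (M → Q)) : Prop :=
  ∀ x ∈ X, ∀ x' ∈ X, Δ x = Δ x' → {m : M | x m ≠ x' m}.Finite → x = x'

/-- The cell space `R` is right amenable: there is a finitely additive probability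
measure on the power set of `M` that is semi-invariant under the right semi-action. -/
def RightAmenable (R : CellSpace G M) : Prop :=
  ∃ μ : Set M → ℝ, (∀ A : Set M, 0 ≤ μ A) ∧ μ Set.univ = 1 ∧
    (∀ A B : Set M, Disjoint A B → μ (A ∪ B) = μ A + μ B) ∧
    ∀ (g : G) (A : Set M), Set.InjOn (fun m => R.sAct m g) A →
      μ ((fun m => R.sAct m g) '' A) = μ A

/-- `F` is a right Følner net in `R` (indexed by the directed set `I`). -/
def IsFolnerNet (R : CellSpace G M) (S : Set G) {I : Type*} [Preorder I]
    (F : I → Set M) : Prop :=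
  (∀ i, (F i).Nonempty) ∧ (∀ i, (F i).Finite) ∧
  ∀ ρ : ℕ, Tendsto (fun i => ((R.bdry S (F i) ρ).ncard : ℝ) / ((F i).ncard : ℝ))
    atTop (nhds 0)

/-- The entropy of `X ⊆ Q^M` with respect to the net `F`:
`limsup_i log|X_{F_i}| / |F_i|`. -/
noncomputable def entropy (R : CellSpace G M) (S : Set G) {I : Type*} [Preorder I]
    (F : I → Set M) (X : Set (M → Q)) : ℝ :=
  limsup (fun i => Real.log ((restr (F i) X).ncard : ℝ) / ((F i).ncard : ℝ)) atTop

/-- `T` is a `⟨θ, κ, θ'⟩`-tiling of `R`. -/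
def IsTiling (R : CellSpace G M) (S : Set G) (θ κ θ' : ℕ) (T : Set M) : Prop :=
  (∀ t ∈ T, ∀ t' ∈ T, t ≠ t' →
    ∀ a ∈ R.ball S t θ, ∀ b ∈ R.ball S t' θ, κ + 1 ≤ R.dist S a b) ∧
  ∀ m : M, ∃ t ∈ T, m ∈ R.ball S t θ'

/-- The action `h ⊛ c` of `h ∈ G` on configurations: `(h ⊛ c)(m) = c(h⁻¹ ▷ m)`. -/
def shiftAct (R : CellSpace G M) (h : G) (c : M → Q) : M → Q :=
  fun m => c (R.act h⁻¹ m)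


namespace CellSpace

lemma act_inv_act (R : CellSpace G M) (g : G) (m : M) : R.act g⁻¹ (R.act g m) = m := by
  rw [← R.mul_act, inv_mul_cancel, R.one_act]

lemma stab_inv (R : CellSpace G M) {g : G} (h : R.stab g) : R.stab g⁻¹ := by
  unfold stab at *
  conv_lhs => rw [← h]
  exact R.act_inv_act g R.m0

lemma chain_refl (R : CellSpace G M) (S : Set G) (m : M) : R.Chain S m m 0 :=
  ⟨fun _ => m, rfl, rfl, fun i hi => by omega⟩

lemma Chain.trans (R : CellSpace G M) (S : Set G) {a b c : M} {n k : ℕ}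
    (h1 : R.Chain S a b n) (h2 : R.Chain S b c k) : R.Chain S a c (n + k) := by
  obtain ⟨f, f0, fn, hf⟩ := h1
  obtain ⟨g, g0, gk, hg⟩ := h2
  refine ⟨fun j => if j < n then f j else g (j - n), ?_, ?_, ?_⟩
  · rcases Nat.eq_zero_or_pos n with h | h
    · subst h
      show (if (0:ℕ) < 0 then f 0 else g (0 - 0)) = a
      rw [if_neg (lt_irrefl 0), Nat.sub_zero, g0, ← fn, f0]
    · simp [h, f0]
  · have : ¬ (n + k < n) := by omega
    simp [this, gk]
  · intro i hi
    rcases lt_or_ge (i + 1) n with h | h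
    · obtain ⟨s, hs, hstep⟩ := hf i (by omega)
      exact ⟨s, hs, by simp [h, Nat.lt_of_succ_lt h, hstep]⟩
    · rcases lt_or_ge i n with h' | h'
      · -- i + 1 = n
        have hin : i + 1 = n := by omega
        obtain ⟨s, hs, hstep⟩ := hf i (by omega)
        refine ⟨s, hs, ?_⟩
        simp only []
        rw [if_neg (by omega : ¬ i + 1 < n), if_pos h', hin, Nat.sub_self, g0, ← fn,
          ← hin, hstep]
      · obtain ⟨s, hs, hstep⟩ := hg (i - n) (by omega)
        refine ⟨s, hs, ?_⟩
        have h1 : ¬ (i + 1 < n) := by omega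
        have h2 : ¬ (i < n) := by omega
        have h3 : i + 1 - n = (i - n) + 1 := by omega
        simp [h1, h2, h3, hstep]

lemma step_rev (R : CellSpace G M) {S : Set G} (hS : R.IsRightGenSet S) {s : G}
    (hs : s ∈ S) (m : M) : ∃ s' ∈ S, R.sAct (R.sAct m s) s' = m := by
  set n := R.sAct m s with hn
  set g0 := (R.coord m * s)⁻¹ * R.coord n with hg0
  have hstab : R.stab g0 := by
    unfold stab
    rw [hg0, R.mul_act, R.coord_act, hn]
    unfold sAct
    exact R.act_inv_act _ _
  refine ⟨g0⁻¹ * s⁻¹, hS.stab_mul g0⁻¹ (R.stab_inv hstab) s⁻¹ (hS.symm s hs), ?_⟩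
  unfold sAct
  have hcn : R.coord n = R.coord m * s * g0 := by
    rw [hg0]; group
  rw [hcn]
  have : R.coord m * s * g0 * (g0⁻¹ * s⁻¹) = R.coord m := by group
  rw [this, R.coord_act]

lemma Chain.symm (R : CellSpace G M) {S : Set G} (hS : R.IsRightGenSet S) {a b : M} :
    ∀ {n : ℕ}, R.Chain S a b n → R.Chain S b a n := by
  intro n
  induction n generalizing a b with
  | zero =>
    rintro ⟨f, f0, fn, -⟩
    have : a = b := f0 ▸ fn ▸ rfl
    exact this ▸ R.chain_refl S a
  | succ n ih =>
    rintro ⟨f, f0, fn, hf⟩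
    obtain ⟨s, hs, hstep⟩ := hf n (by omega)
    have h1 : R.Chain S a (f n) n := ⟨f, f0, rfl, fun i hi => hf i (by omega)⟩
    obtain ⟨s', hs', hrev⟩ := R.step_rev hS hs (f n)
    have h2 : R.Chain S b (f n) 1 := by
      refine ⟨fun j => if j = 0 then b else f n, rfl, by simp, ?_⟩
      intro i hi
      have : i = 0 := by omega
      subst this
      exact ⟨s', hs', by simp [← fn, hstep, hrev]⟩
    have := Chain.trans R S h2 (ih h1)
    rwa [Nat.add_comm] at this

lemma chain_exists (R : CellSpace G M) {S : Set G} (hS : R.IsRightGenSet S) (m m' : M) :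
    ∃ n, R.Chain S m m' n := by
  obtain ⟨k, f, f0, fk, hf⟩ := hS.generates m
  obtain ⟨k', f', f0', fk', hf'⟩ := hS.generates m'
  have c1 : R.Chain S R.m0 m k := ⟨f, f0, fk, hf⟩
  have c2 : R.Chain S R.m0 m' k' := ⟨f', f0', fk', hf'⟩
  exact ⟨k + k', Chain.trans R S (Chain.symm R hS c1) c2⟩

lemma dist_le_of_chain (R : CellSpace G M) (S : Set G) {m m' : M} {n : ℕ}
    (h : R.Chain S m m' n) : R.dist S m m' ≤ n := Nat.sInf_le h

lemma chain_dist (R : CellSpace G M) {S : Set G} (hS : R.IsRightGenSet S) (m m' : M) :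
    R.Chain S m m' (R.dist S m m') :=
  Nat.sInf_mem (Set.nonempty_def.mpr (R.chain_exists hS m m'))

lemma dist_self (R : CellSpace G M) (S : Set G) (m : M) : R.dist S m m = 0 :=
  Nat.le_zero.mp (R.dist_le_of_chain S (R.chain_refl S m))

lemma dist_symm (R : CellSpace G M) {S : Set G} (hS : R.IsRightGenSet S) (m m' : M) :
    R.dist S m m' = R.dist S m' m :=
  le_antisymm (R.dist_le_of_chain S (Chain.symm R hS (R.chain_dist hS m' m)))
    (R.dist_le_of_chain S (Chain.symm R hS (R.chain_dist hS m m')))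

lemma dist_triangle (R : CellSpace G M) {S : Set G} (hS : R.IsRightGenSet S) (a b c : M) :
    R.dist S a c ≤ R.dist S a b + R.dist S b c :=
  R.dist_le_of_chain S (Chain.trans R S (R.chain_dist hS a b) (R.chain_dist hS b c))

end CellSpace


namespace CellSpace

/-- Walk from `t` following optional generator steps. -/
def walk (R : CellSpace G M) (t : M) (σ : ℕ → Option G) : ℕ → M
  | 0 => t
  | n + 1 => (σ n).elim (R.walk t σ n) (fun s => R.sAct (R.walk t σ n) s)

lemma ball_subset_image (R : CellSpace G M) {S : Set G} (hS : R.IsRightGenSet S)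
    (t : M) (ρ : ℕ) :
    R.ball S t ρ ⊆ (fun σ : Fin ρ → Option {s : G // s ∈ S} =>
      R.walk t (fun j => if h : j < ρ then ((σ ⟨j, h⟩).map (fun s => (s : G))) else none) ρ)
      '' Set.univ := by
  intro m hm
  have hdist : R.dist S t m ≤ ρ := hm
  obtain ⟨f, f0, fn, hf⟩ := R.chain_dist hS t m
  set n := R.dist S t m with hn
  choose s hsS hstep using hf
  refine ⟨fun j => if h : (j : ℕ) < n then some ⟨s j h, hsS j h⟩ else none,
    Set.mem_univ _, ?_⟩
  set σ' : ℕ → Option G := fun j => if h : j < ρ then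
    (((fun j : Fin ρ => if h : (j : ℕ) < n then some (⟨s j h, hsS j h⟩ : {s : G // s ∈ S})
      else none) ⟨j, h⟩).map (fun s => (s : G))) else none with hσ'
  have hσeq : ∀ (j : ℕ) (hj : j < n), σ' j = some (s j hj) := by
    intro j hj
    have hjρ : j < ρ := by omega
    simp [hσ', hjρ, hj]
  have hσnone : ∀ j, n ≤ j → σ' j = none := by
    intro j hj
    by_cases hjρ : j < ρ
    · simp [hσ', hjρ, Nat.not_lt.mpr hj]
    · simp [hσ', hjρ]
  have key : ∀ j, R.walk t σ' j = f (min j n) := by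
    intro j
    induction j with
    | zero => simpa [walk] using f0.symm
    | succ j ih =>
      by_cases hj : j < n
      · have h1 : σ' j = some (s j hj) := hσeq j hj
        have h2 : min j n = j := by omega
        have h3 : min (j + 1) n = j + 1 := by omega
        rw [walk, h1, Option.elim_some, ih, h2, h3, hstep j hj]
      · have h1 : σ' j = none := hσnone j (by omega)
        have h2 : min j n = n := by omega
        have h3 : min (j + 1) n = n := by omega
        rw [walk, h1, Option.elim_none, ih, h2, h3]
  show R.walk t σ' ρ = m
  rw [key ρ, min_eq_right hdist, fn]

lemma ball_finite (R : CellSpace G M) {S : Set G} (hS : R.IsRightGenSet S)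
    (t : M) (ρ : ℕ) : (R.ball S t ρ).Finite := by
  have : Finite {s : G // s ∈ S} := hS.finite.to_subtype
  cases nonempty_fintype {s : G // s ∈ S}
  exact (Set.finite_univ.image _).subset (R.ball_subset_image hS t ρ)

lemma ball_ncard_le (R : CellSpace G M) {S : Set G} (hS : R.IsRightGenSet S)
    (t : M) (ρ : ℕ) :
    (R.ball S t ρ).ncard ≤ Nat.card (Fin ρ → Option {s : G // s ∈ S}) := by
  have : Finite {s : G // s ∈ S} := hS.finite.to_subtype
  cases nonempty_fintype {s : G // s ∈ S}
  calc (R.ball S t ρ).ncard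
      ≤ ((fun σ : Fin ρ → Option {s : G // s ∈ S} =>
          R.walk t (fun j => if h : j < ρ then ((σ ⟨j, h⟩).map (fun s => (s : G))) else none) ρ)
          '' Set.univ).ncard :=
        Set.ncard_le_ncard (R.ball_subset_image hS t ρ) (Set.finite_univ.image _)
    _ ≤ (Set.univ : Set (Fin ρ → Option {s : G // s ∈ S})).ncard :=
        Set.ncard_image_le Set.finite_univ
    _ = Nat.card (Fin ρ → Option {s : G // s ∈ S}) := Set.ncard_univ _

lemma clos_finite (R : CellSpace G M) {S : Set G} (hS : R.IsRightGenSet S)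
    {A : Set M} (hA : A.Finite) (ρ : ℕ) : (R.clos S A ρ).Finite := by
  refine (hA.biUnion (fun a _ => R.ball_finite hS a ρ)).subset ?_
  intro m hm
  obtain ⟨x, hx1, hx2⟩ := hm
  have : R.dist S x m ≤ ρ := by rw [← R.dist_symm hS]; exact hx1
  exact Set.mem_biUnion hx2 this

end CellSpace


theorem stmt11 {I : Type*} [Nonempty I] [SemilatticeSup I]
    (R : CellSpace G M) (S : Set G) (hS : R.IsRightGenSet S)
    (hAm : RightAmenable R) (F : I → Set M) (hF : IsFolnerNet R S F)
    (θ κ θ' : ℕ)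
    (T : Set M) (hT : ∀ m : M, ∃ t ∈ T, m ∈ R.ball S t θ') :
    ∃ ε : ℝ, 0 < ε ∧ ∃ i₀ : I, ∀ i : I, i₀ ≤ i →
      ε * ((F i).ncard : ℝ) ≤ ((T ∩ R.inter S (F i) (θ + κ)).ncard : ℝ) := by
  classical
  obtain ⟨hne, hfin, hconv⟩ := hF
  have hSfin : Finite {s : G // s ∈ S} := hS.finite.to_subtype
  cases nonempty_fintype {s : G // s ∈ S}
  set c := Nat.card (Fin θ' → Option {s : G // s ∈ S}) with hc
  have hcpos : 0 < c := Nat.card_pos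
  have hcposR : (0 : ℝ) < (c : ℝ) := by exact_mod_cast hcpos
  refine ⟨1 / (2 * c), by positivity, ?_⟩
  have hev : ∀ᶠ i in atTop,
      ((R.bdry S (F i) (θ + κ + θ')).ncard : ℝ) / ((F i).ncard : ℝ) < 1 / 2 :=
    (hconv (θ + κ + θ')).eventually_lt_const (by norm_num)
  obtain ⟨i₀, hi₀⟩ := eventually_atTop.mp hev
  refine ⟨i₀, fun i hi => ?_⟩
  have hFfin := hfin i
  have hFpos : (0 : ℝ) < ((F i).ncard : ℝ) := by
    exact_mod_cast (Set.ncard_pos hFfin).mpr (hne i)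
  set A := R.inter S (F i) (θ + κ + θ') with hA
  set B := T ∩ R.inter S (F i) (θ + κ) with hB
  -- every element of A is within θ' of some element of B
  have hcover : ∀ a ∈ A, ∃ t ∈ B, R.dist S t a ≤ θ' := by
    intro a ha
    obtain ⟨t, htT, hta⟩ := hT a
    have hta' : R.dist S t a ≤ θ' := hta
    refine ⟨t, ⟨htT, ?_, ?_⟩, hta'⟩
    · apply ha.2
      show R.dist S a t ≤ θ + κ + θ'
      rw [R.dist_symm hS]
      exact le_trans hta' (by omega)
    · intro x hx
      apply ha.2
      show R.dist S a x ≤ θ + κ + θ'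
      have hx' : R.dist S t x ≤ θ + κ := hx
      calc R.dist S a x ≤ R.dist S a t + R.dist S t x := R.dist_triangle hS a t x
        _ ≤ θ' + (θ + κ) := by
            refine add_le_add ?_ hx'
            rw [R.dist_symm hS]; exact hta'
        _ = θ + κ + θ' := by omega
  have hcover' : ∀ a : M, ∃ t : M, a ∈ A → t ∈ B ∧ R.dist S t a ≤ θ' := by
    intro a
    by_cases h : a ∈ A
    · obtain ⟨t, htB, htd⟩ := hcover a h
      exact ⟨t, fun _ => ⟨htB, htd⟩⟩
    · exact ⟨a, fun h' => absurd h' h⟩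
  choose τ hτ using hcover'
  have hAfin : A.Finite := hFfin.subset (fun a ha => ha.1)
  have hBfin : B.Finite := hFfin.subset (fun b hb => hb.2.1)
  -- card A ≤ c * card B
  have hAB : A.ncard ≤ c * B.ncard := by
    rw [Set.ncard_eq_toFinset_card A hAfin, Set.ncard_eq_toFinset_card B hBfin]
    refine Finset.card_le_mul_card_image_of_maps_to (f := τ) ?_ c ?_
    · intro a ha
      rw [Set.Finite.mem_toFinset] at ha ⊢
      exact (hτ a ha).1
    · intro b hb
      have hsub : ↑(hAfin.toFinset.filter fun a => τ a = b) ⊆ R.ball S b θ' := by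
        intro a ha
        rw [Finset.coe_filter, Set.mem_setOf_eq, Set.Finite.mem_toFinset] at ha
        obtain ⟨haA, hab⟩ := ha
        show R.dist S b a ≤ θ'
        rw [← hab]
        exact (hτ a haA).2
      calc (hAfin.toFinset.filter fun a => τ a = b).card
          = (↑(hAfin.toFinset.filter fun a => τ a = b) : Set M).ncard :=
            (Set.ncard_coe_finset _).symm
        _ ≤ (R.ball S b θ').ncard := Set.ncard_le_ncard hsub (R.ball_finite hS b θ')
        _ ≤ c := R.ball_ncard_le hS b θ'
  -- Folner bound: card A ≥ card F - card bdry
  have hAsubF : A ⊆ F i := fun a ha => ha.1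
  have hsub1 : F i \ A ⊆ R.bdry S (F i) (θ + κ + θ') := by
    rintro m ⟨hmF, hmA⟩
    refine ⟨⟨m, ?_, hmF⟩, hmA⟩
    show R.dist S m m ≤ θ + κ + θ'
    rw [R.dist_self]
    exact Nat.zero_le _
  have hbdfin : (R.bdry S (F i) (θ + κ + θ')).Finite :=
    ((R.clos_finite hS hFfin (θ + κ + θ')).subset Set.diff_subset)
  have h2 : ((F i).ncard : ℝ) ≤ ((R.bdry S (F i) (θ + κ + θ')).ncard : ℝ) + (A.ncard : ℝ) := by
    have e1 : (F i \ A).ncard + A.ncard = (F i).ncard :=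
      Set.ncard_diff_add_ncard_of_subset hAsubF hFfin
    have e2 : (F i \ A).ncard ≤ (R.bdry S (F i) (θ + κ + θ')).ncard :=
      Set.ncard_le_ncard hsub1 hbdfin
    exact_mod_cast by omega
  have h3 : ((R.bdry S (F i) (θ + κ + θ')).ncard : ℝ) < ((F i).ncard : ℝ) / 2 := by
    have := hi₀ i hi
    rw [div_lt_iff₀ hFpos] at this
    linarith
  have h1 : (A.ncard : ℝ) ≤ (c : ℝ) * (B.ncard : ℝ) := by exact_mod_cast hAB
  rw [div_mul_eq_mul_div, one_mul, div_le_iff₀ (by positivity : (0 : ℝ) < 2 * (c : ℝ))]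
  have h4 : ((F i).ncard : ℝ) ≤ 2 * ((c : ℝ) * (B.ncard : ℝ)) := by linarith
  calc ((F i).ncard : ℝ) ≤ 2 * ((c : ℝ) * (B.ncard : ℝ)) := h4
    _ = (B.ncard : ℝ) * (2 * (c : ℝ)) := by ring

end GoE
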